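/- arXiv:1702.08216 — 3 statements merged into one kernel-verified Lean document; each statement's English description precedes it below -/
import Mathlib

section
/- (i) For each j with 1 ≤ j ≤ n−m, the coefficient of a_jⁿ in D̃_m (i.e. the leading coefficient of D̃_m written as a polynomial in a_j with coefficients in the ring of the remaining variables) equals ε · b_jⁿ · (1 − b₀/b_j)^j · aₙ^{n−m−j} for some sign ε ∈ {1, −1}. (ii) For each s with 1 ≤ s ≤ m−1, the coefficient of a_{n−m+s}^{n−m} in D̃_m equals ε · b_{n−m}^{m−s} · b₀^{n−m+s} · a_{n−m}^{m−s} for some sign ε ∈ {1, −1}. -/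
open Polynomial

/-- Sylvester-style matrix of `f` (formal degree `df`) and `g` (formal degree `dg`):
rows `0,…,dg-1` carry shifted coefficients of `f`, rows `dg,…,dg+df-1` those of `g`. -/
noncomputable def sylv {R : Type*} [CommRing R] (f g : R[X]) (df dg : ℕ) :
    Matrix (Fin (dg + df)) (Fin (dg + df)) R :=
  Matrix.of fun i j =>
    if (i : ℕ) < dg then
      (if (i : ℕ) ≤ (j : ℕ) ∧ (j : ℕ) ≤ (i : ℕ) + df then f.coeff (df + (i : ℕ) - (j : ℕ)) else 0)
    else
      (if (i : ℕ) - dg ≤ (j : ℕ) ∧ (j : ℕ) ≤ (i : ℕ) then g.coeff ((i : ℕ) - (j : ℕ)) else 0)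

/-- The resultant of `f` and `g`, taken with formal degrees `df` and `dg`. -/
noncomputable def res {R : Type*} [CommRing R] (f g : R[X]) (df dg : ℕ) : R :=
  (sylv f g df dg).det

/-- `P = xⁿ + a₁ x^{n-1} + ⋯ + aₙ`, where `a_j` is the variable `X ⟨j-1,_⟩`. -/
noncomputable def Pgen (n : ℕ) : Polynomial (MvPolynomial (Fin n) ℂ) :=
  Polynomial.X ^ n +
    ∑ i : Fin n, Polynomial.C (MvPolynomial.X i) * Polynomial.X ^ (n - 1 - (i : ℕ))

/-- `P_* = Σ_{j=0}^{n-m} b_j a_j x^{n-m-j}` with `a₀ = 1`. -/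
noncomputable def Pstar (n m : ℕ) (b : ℕ → ℂ) : Polynomial (MvPolynomial (Fin n) ℂ) :=
  Polynomial.C (MvPolynomial.C (b 0)) * Polynomial.X ^ (n - m) +
    ∑ i : Fin n, if (i : ℕ) < n - m then
      Polynomial.C (MvPolynomial.C (b ((i : ℕ) + 1)) * MvPolynomial.X i) *
        Polynomial.X ^ (n - m - 1 - (i : ℕ))
    else 0

/-- `D̃_m = Res(P, P_*)`. -/
noncomputable def Dtilde (n m : ℕ) (b : ℕ → ℂ) : MvPolynomial (Fin n) ℂ :=
  res (Pgen n) (Pstar n m b) n (n - m)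

/-- View a polynomial in `a₁,…,aₙ` as a univariate polynomial in the variable `a_k`,
with coefficients in the polynomial ring in the remaining variables. -/
noncomputable def polyInK {n : ℕ} (k : Fin n) (q : MvPolynomial (Fin n) ℂ) :
    Polynomial (MvPolynomial {j : Fin n // j ≠ k} ℂ) :=
  MvPolynomial.optionEquivLeft ℂ {j : Fin n // j ≠ k}
    (MvPolynomial.rename (Equiv.optionSubtypeNe k).symm q)

/-- `D̃_{m,k} = Res(D̃_m, ∂D̃_m/∂a_k, a_k)`, where `D̃_m` is taken with degree `d` in `a_k`
(and its partial derivative with degree `d - 1`). -/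
noncomputable def DtildeK (n m : ℕ) (b : ℕ → ℂ) (k : Fin n) (d : ℕ) :
    MvPolynomial {j : Fin n // j ≠ k} ℂ :=
  res (polyInK k (Dtilde n m b)) (Polynomial.derivative (polyInK k (Dtilde n m b))) d (d - 1)

/-- The canonical restriction `ℂ[a₁,…,aₙ] → ℂ[a^k]` sending `a_k ↦ 0` and fixing the
other variables (it is faithful on polynomials not involving `a_k`). -/
noncomputable def toSub {n : ℕ} (k : Fin n) :
    MvPolynomial (Fin n) ℂ →ₐ[ℂ] MvPolynomial {j : Fin n // j ≠ k} ℂ :=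
  MvPolynomial.aeval (fun j => if h : j = k then 0 else MvPolynomial.X ⟨j, h⟩)

/-- The canonical restriction `ℂ[a₁,…,aₙ] → ℂ[a₁,…,a_{n-m}]` sending `a_j ↦ 0` for
`j > n - m` and fixing the other variables. -/
noncomputable def toLow (n m : ℕ) : MvPolynomial (Fin n) ℂ →ₐ[ℂ] MvPolynomial (Fin (n - m)) ℂ :=
  MvPolynomial.aeval (fun j : Fin n =>
    if h : (j : ℕ) < n - m then MvPolynomial.X ⟨(j : ℕ), h⟩ else 0)

/-- `P_{m,k} = b_k·P − x^m·P_*`. -/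
noncomputable def Pmk (n m : ℕ) (b : ℕ → ℂ) (k : ℕ) : Polynomial (MvPolynomial (Fin n) ℂ) :=
  Polynomial.C (MvPolynomial.C (b k)) * Pgen n - Polynomial.X ^ m * Pstar n m b

/-- The evaluation of `P` at a parameter point `a ∈ ℂⁿ`. -/
noncomputable def Pev (n : ℕ) (a : Fin n → ℂ) : Polynomial ℂ :=
  (Pgen n).map (MvPolynomial.eval a)

/-- The evaluation of `P_*` at a parameter point `a ∈ ℂⁿ`. -/
noncomputable def Psev (n m : ℕ) (b : ℕ → ℂ) (a : Fin n → ℂ) : Polynomial ℂ :=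
  (Pstar n m b).map (MvPolynomial.eval a)

/-- The Maxwell stratum: `P(·,a)` and `P_*(·,a)` have exactly two common roots, both
simple roots of each, and all remaining roots of `P` and of `P_*` are simple (hence
mutually distinct, there being no further common roots). -/
def Maxwell (n m : ℕ) (b : ℕ → ℂ) : Set (Fin n → ℂ) :=
  {a | ∃ z₁ z₂ : ℂ, z₁ ≠ z₂ ∧
    (∀ z : ℂ, ((Pev n a).IsRoot z ∧ (Psev n m b a).IsRoot z) ↔ (z = z₁ ∨ z = z₂)) ∧
    (∀ z : ℂ, (Pev n a).IsRoot z → (Pev n a).rootMultiplicity z = 1) ∧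
    (∀ z : ℂ, (Psev n m b a).IsRoot z → (Psev n m b a).rootMultiplicity z = 1)}

/-- The set `Θ`: `P(·,a)` has a (simple) root which is a double root of `P_*(·,a)`,
all the remaining roots of `P` and of `P_*` are simple, and `P` and `P_*` have no
further common roots. -/
def Theta (n m : ℕ) (b : ℕ → ℂ) : Set (Fin n → ℂ) :=
  {a | ∃ z : ℂ, (Pev n a).IsRoot z ∧ (Psev n m b a).rootMultiplicity z = 2 ∧
    (Pev n a).rootMultiplicity z = 1 ∧
    (∀ w : ℂ, w ≠ z → (Pev n a).IsRoot w → (Pev n a).rootMultiplicity w = 1) ∧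
    (∀ w : ℂ, w ≠ z → (Psev n m b a).IsRoot w → (Psev n m b a).rootMultiplicity w = 1) ∧
    (∀ w : ℂ, w ≠ z → ¬((Pev n a).IsRoot w ∧ (Psev n m b a).IsRoot w))}

/-- The projection `ℂⁿ → ℂ^{n-1}` forgetting the coordinate `a_k`. -/
def projK {n : ℕ} (k : Fin n) (a : Fin n → ℂ) : {j : Fin n // j ≠ k} → ℂ :=
  fun j => a j.1

/-!
`D̃_m` is Mathlib's resultant `Res(P, P_*)`. As a polynomial in `a_k`, every column of the
Sylvester matrix is affine in `a_k`, so the coefficient of `a_k^r`, where `r` is the number of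
columns involving `a_k`, is the determinant with those columns replaced by their `a_k`-parts: a
resultant in which one of the two polynomials is a monomial `c xᵉ`. Such a resultant is a signed
product of powers of `c` and of the leading coefficient and constant term of the other polynomial.

For `j > n - m` the variable `a_j` occurs only in `P`, as `a_j x^{n-j}`. For `j ≤ n - m` it also
occurs in `P_*`, as `b_j a_j x^{n-m-j}`; replacing `P` by `P_{m,j} = b_j P - x^m P_*` multiplies
the resultant by `b_j^{n-m}` and removes `a_j` from the first polynomial, whose leading
coefficient is then `b_j - b_0` and whose constant term is `b_j aₙ`.
-/

namespace Matrix

variable {R ι : Type*} [CommRing R] [Fintype ι] [DecidableEq ι]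

open Polynomial in
lemma coeff_det_map_C_add_X_smul_map_C (A B : Matrix ι ι R) (S : Finset ι)
    (hB : ∀ i, ∀ j ∉ S, B i j = 0) :
    (det (A.map C + (X : R[X]) • B.map C)).coeff S.card =
      det (of fun i j => if j ∈ S then B i j else A i j) := by
  -- scaling the columns outside `S` by `X` gives `X • mixed + constant`, whose coefficient of
  -- `X ^ card ι` is `det mixed`
  have hscale :
      det (of fun i j => (if j ∈ S then 1 else X) * (A.map C + (X : R[X]) • B.map C) i j) =
        det ((X : R[X]) • (of fun i j => if j ∈ S then B i j else A i j).map C +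
          (of fun i j => if j ∈ S then A i j else 0).map C) := by
    congr 1
    refine Matrix.ext fun i j => ?_
    by_cases hj : j ∈ S
    · simp only [hj, if_true, one_mul, add_apply, smul_apply, map_apply, of_apply, smul_eq_mul]
      ring
    · simp only [hj, if_false, hB i j hj, add_apply, smul_apply, map_apply, of_apply, smul_eq_mul,
        map_zero]
      ring
  rw [det_mul_row, Finset.prod_ite, Finset.prod_const_one, one_mul, Finset.prod_const,
    Finset.filter_not, Finset.card_sdiff_of_subset (by simp), Finset.filter_mem_eq_inter,
    Finset.univ_inter, Finset.card_univ] at hscale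
  have := congrArg (coeff · (S.card + (Fintype.card ι - S.card))) hscale
  rw [coeff_X_pow_mul] at this
  simpa only [Nat.add_sub_cancel' S.card_le_univ, coeff_det_X_add_C_card] using this

end Matrix

namespace Polynomial

variable {R : Type*} [CommRing R]

lemma sylvester_apply (f g : R[X]) (m n : ℕ) (i j : Fin (m + n)) :
    sylvester f g m n i j =
      if (j : ℕ) < m then
        (if (j : ℕ) ≤ i ∧ (i : ℕ) ≤ j + n then g.coeff (i - j) else 0)
      else
        (if (j : ℕ) - m ≤ i ∧ (i : ℕ) ≤ j then f.coeff (i - (j - m)) else 0) := by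
  induction j using Fin.addCases with
  | left j => simp [sylvester]
  | right j => simp [sylvester, add_comm m]

lemma sylvester_map_C_add_C_X_mul_left (f₀ f₁ g : R[X]) (m n : ℕ) :
    sylvester (f₀.map C + C X * f₁.map C) (g.map C) m n =
      (sylvester f₀ g m n).map C + (X : R[X]) • (sylvester f₁ 0 m n).map C := by
  refine Matrix.ext fun i j => ?_
  induction j using Fin.addCases with
  | left j => simp [sylvester, apply_ite C]
  | right j =>
    simp only [sylvester, Matrix.of_apply, Fin.addCases_right, Matrix.add_apply,
      Matrix.smul_apply, Matrix.map_apply, coeff_add, coeff_map, coeff_C_mul, smul_eq_mul]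
    split_ifs <;> simp

lemma coeff_resultant_map_C_add_C_X_mul_left (f₀ f₁ g : R[X]) (m n : ℕ) :
    (resultant (f₀.map C + C X * f₁.map C) (g.map C) m n).coeff n = resultant f₁ g m n := by
  classical
  let S : Finset (Fin (m + n)) := Finset.univ.map (Fin.natAddEmb m)
  have hmem : ∀ j : Fin n, Fin.natAdd m j ∈ S := fun j => by simp [S]
  have hnmem : ∀ j : Fin m, Fin.castAdd n j ∉ S := fun j => by
    simp [S, Fin.ext_iff]; omega
  have hS : S.card = n := by simp [S]
  have key := Matrix.coeff_det_map_C_add_X_smul_map_C (sylvester f₀ g m n)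
    (sylvester f₁ 0 m n) S fun i j hj => by
      induction j using Fin.addCases with
      | left j => simp [sylvester]
      | right j => exact absurd (hmem j) hj
  rw [hS] at key
  rw [resultant, sylvester_map_C_add_C_X_mul_left, key, resultant]
  congr 1
  refine Matrix.ext fun i j => ?_
  induction j using Fin.addCases with
  | left j => simp [hnmem, sylvester]
  | right j => simp [hmem, sylvester]

lemma coeff_resultant_map_C_add_C_X_mul_right (f g₀ g₁ : R[X]) (m n : ℕ) :
    (resultant (f.map C) (g₀.map C + C X * g₁.map C) m n).coeff m = resultant f g₁ m n := by
  rw [resultant_comm, ← C_1, ← C_neg, ← C_pow, coeff_C_mul,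
    coeff_resultant_map_C_add_C_X_mul_left, resultant_comm g₁, ← mul_assoc, ← pow_add,
    mul_comm m n, Even.neg_one_pow ⟨_, rfl⟩, one_mul]

lemma resultant_C_mul_sub_X_pow_mul_left (c : R) (f g : R[X]) {k m n : ℕ} (hk : k + n ≤ m)
    (hg : g.natDegree ≤ n) :
    resultant (C c * f - X ^ k * g) g m n = c ^ n * resultant f g m n := by
  rw [show C c * f - X ^ k * g = C c * f + g * -X ^ k by ring,
    resultant_add_mul_left _ _ _ _ _ (by grw [natDegree_neg, natDegree_X_pow_le]; exact hk) hg,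
    resultant_C_mul_left]

lemma resultant_X_pow_left_of_le (g : R[X]) {e m n : ℕ} (he : e ≤ m) (hg : g.natDegree ≤ n) :
    resultant (X ^ e) g m n = (-1) ^ (n * (m - e)) * g.coeff n ^ (m - e) * g.coeff 0 ^ e := by
  obtain ⟨k, rfl⟩ := Nat.exists_eq_add_of_le he
  rw [resultant_add_left_deg _ _ _ _ _ (natDegree_X_pow_le e), resultant_X_pow_left _ _ _ hg,
    Nat.add_sub_cancel_left]

lemma resultant_C_mul_X_pow_right_of_le (f : R[X]) (c : R) {e m n : ℕ} (he : e ≤ n)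
    (hf : f.natDegree ≤ m) :
    resultant f (C c * X ^ e) m n =
      (-1) ^ (m * e) * c ^ m * f.coeff m ^ (n - e) * f.coeff 0 ^ e := by
  obtain ⟨k, rfl⟩ := Nat.exists_eq_add_of_le he
  rw [resultant_C_mul_right, resultant_add_right_deg _ _ _ _ _ (natDegree_X_pow_le e),
    resultant_X_pow_right _ _ _ hf, Nat.add_sub_cancel_left]
  ring

end Polynomial

-- `sylv` is the transpose of Mathlib's `sylvester`, with rows and columns listed in reverse order.
lemma res_eq_resultant {R : Type*} [CommRing R] (f g : R[X]) (df dg : ℕ) :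
    res f g df dg = resultant f g df dg := by
  let e : Fin (dg + df) ≃ Fin (df + dg) := (finCongr (add_comm dg df)).trans Fin.revPerm
  rw [res, resultant, ← Matrix.det_transpose, ← Matrix.det_submatrix_equiv_self e]
  congr 1
  ext i j
  have hi := i.isLt
  have hj := j.isLt
  simp only [sylv, Matrix.of_apply, Matrix.submatrix_apply, Matrix.transpose_apply,
    Polynomial.sylvester_apply, e, Equiv.trans_apply, finCongr_apply, Fin.revPerm_apply,
    Fin.val_rev, Fin.val_cast]
  split_ifs <;> first | rfl | omega | (congr 1; omega)

section

variable {n : ℕ}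

lemma Pgen_natDegree_le : (Pgen n).natDegree ≤ n := by
  refine natDegree_add_le_of_degree_le (natDegree_X_pow_le n)
    (natDegree_sum_le_of_forall_le _ _ fun i _ => ?_)
  exact (natDegree_C_mul_X_pow_le _ _).trans (by omega)

lemma Pgen_coeff_self (hn : 0 < n) : (Pgen n).coeff n = 1 := by
  simp only [Pgen, coeff_add, coeff_X_pow, ↓reduceIte, finsetSum_coeff, coeff_C_mul, mul_ite,
    mul_one, mul_zero, add_eq_left]
  exact Finset.sum_eq_zero fun x _ => if_neg (by omega)

lemma Pgen_coeff_zero (hn : 0 < n) : (Pgen n).coeff 0 = MvPolynomial.X ⟨n - 1, by omega⟩ := by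
  simp only [Pgen, coeff_add, coeff_X_pow, finsetSum_coeff, mul_coeff_zero, coeff_C_zero, mul_ite,
    mul_one, mul_zero]
  rw [if_neg (by omega), zero_add, Finset.sum_eq_single ⟨n - 1, by omega⟩
    (fun x _ hx => if_neg fun h => hx (Fin.ext (by simp; omega))) (by simp)]
  simp

variable (m : ℕ) (b : ℕ → ℂ)

lemma Pstar_natDegree_le : (Pstar n m b).natDegree ≤ n - m := by
  refine natDegree_add_le_of_degree_le (natDegree_C_mul_X_pow_le _ _)
    (natDegree_sum_le_of_forall_le _ _ fun i _ => ?_)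
  split_ifs
  · exact (natDegree_C_mul_X_pow_le _ _).trans (by omega)
  · simp

lemma Pstar_coeff_self : (Pstar n m b).coeff (n - m) = MvPolynomial.C (b 0) := by
  simp only [Pstar, map_mul, coeff_add, coeff_C_mul, coeff_X_pow, ↓reduceIte, mul_one,
    finsetSum_coeff, add_eq_left]
  refine Finset.sum_eq_zero fun x _ => ?_
  split_ifs
  · rw [mul_assoc, coeff_C_mul, coeff_C_mul, coeff_X_pow, if_neg (by omega), mul_zero, mul_zero]
  · rfl

lemma Pstar_coeff_zero (h : m < n) :
    (Pstar n m b).coeff 0 =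
      MvPolynomial.C (b (n - m)) * MvPolynomial.X ⟨n - m - 1, by omega⟩ := by
  simp only [Pstar, map_mul, coeff_add, mul_coeff_zero, coeff_C_zero, coeff_X_pow, mul_ite, mul_one,
    mul_zero, finsetSum_coeff]
  rw [if_neg (by omega), zero_add, Finset.sum_eq_single ⟨n - m - 1, by omega⟩
    (fun x _ hx => ?_) (by simp)]
  · simp [show n - m - 1 + 1 = n - m by omega, show 0 < n - m by omega]
  · split_ifs
    · rw [mul_assoc, coeff_C_mul, coeff_C_mul, coeff_X_pow,
        if_neg fun h => hx (Fin.ext (by simp; omega)), mul_zero, mul_zero]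
    · rfl

lemma Pmk_natDegree_le (hm : m ≤ n) (K : ℕ) : (Pmk n m b K).natDegree ≤ n := by
  refine (natDegree_sub_le _ _).trans
    (max_le ((natDegree_C_mul_le _ _).trans Pgen_natDegree_le) (natDegree_mul_le.trans ?_))
  grw [natDegree_X_pow_le, Pstar_natDegree_le m b]
  omega

lemma Pmk_coeff_self (hn : 0 < n) (hm : m ≤ n) (K : ℕ) :
    (Pmk n m b K).coeff n = MvPolynomial.C (b K - b 0) := by
  rw [Pmk, coeff_sub, coeff_C_mul, Pgen_coeff_self hn, coeff_X_pow_mul', if_pos hm,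
    Pstar_coeff_self, mul_one, map_sub]

lemma Pmk_coeff_zero (hn : 0 < n) (hm : 0 < m) (K : ℕ) :
    (Pmk n m b K).coeff 0 = MvPolynomial.C (b K) * MvPolynomial.X ⟨n - 1, by omega⟩ := by
  rw [Pmk, coeff_sub, coeff_C_mul, Pgen_coeff_zero hn, coeff_X_pow_mul', if_neg (by omega),
    sub_zero]

end

section

variable {n : ℕ} (k : Fin n)

-- `polyInK k` is, by definition, this algebra homomorphism.
noncomputable def polyInKHom :
    MvPolynomial (Fin n) ℂ →ₐ[ℂ] (MvPolynomial {j : Fin n // j ≠ k} ℂ)[X] :=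
  (MvPolynomial.optionEquivLeft ℂ _).toAlgHom.comp
    (MvPolynomial.rename (Equiv.optionSubtypeNe k).symm)

lemma toSub_X_of_ne {i : Fin n} (h : i ≠ k) :
    toSub k (MvPolynomial.X i) = MvPolynomial.X ⟨i, h⟩ := by
  simp [toSub, h]

lemma polyInKHom_X (i : Fin n) :
    polyInKHom k (MvPolynomial.X i) = C (toSub k (MvPolynomial.X i)) + if i = k then X else 0 := by
  by_cases h : i = k
  · subst h
    simp [polyInKHom, toSub, MvPolynomial.optionEquivLeft_X_none]
  · simp [polyInKHom, toSub, h, MvPolynomial.optionEquivLeft_X_some,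
      Equiv.optionSubtypeNe_symm_of_ne h]

lemma polyInKHom_C (c : ℂ) : polyInKHom k (MvPolynomial.C c) = C (MvPolynomial.C c) := by
  simp [polyInKHom]

lemma Pgen_map_polyInKHom {K : ℕ} (hK : (k : ℕ) + 1 = K) :
    (Pgen n).map (polyInKHom k).toRingHom =
      ((Pgen n).map (toSub k).toRingHom).map C + C X * (X ^ (n - K)).map C := by
  simp only [Pgen, Polynomial.map_add, Polynomial.map_pow, Polynomial.map_X, Polynomial.map_sum,
    Polynomial.map_mul, Polynomial.map_C, AlgHom.toRingHom_eq_coe, RingHom.coe_coe, polyInKHom_X,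
    C_add, add_mul, Finset.sum_add_distrib, apply_ite C, map_zero, ite_mul, zero_mul,
    Finset.sum_ite_eq', Finset.mem_univ, if_true, show n - 1 - k = n - K by omega]
  ring

variable (m : ℕ) (b : ℕ → ℂ)

lemma Pstar_map_polyInKHom_of_le_sub {K : ℕ} (hK : (k : ℕ) + 1 = K) (hKm : K ≤ n - m) :
    (Pstar n m b).map (polyInKHom k).toRingHom =
      ((Pstar n m b).map (toSub k).toRingHom).map C +
        C X * (C (MvPolynomial.C (b K)) * X ^ (n - m - K)).map C := by
  subst hK
  simp only [Pstar, Polynomial.map_add, Polynomial.map_pow, Polynomial.map_X, Polynomial.map_sum,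
    Polynomial.map_mul, Polynomial.map_C, AlgHom.toRingHom_eq_coe, RingHom.coe_coe, map_mul,
    polyInKHom_X, apply_ite (Polynomial.map _), Polynomial.map_zero]
  simp only [MvPolynomial.algHom_C, Polynomial.algebraMap_apply, MvPolynomial.algebraMap_eq,
    map_add, apply_ite C, map_zero, mul_add, mul_ite, mul_zero, add_mul, ite_mul, zero_mul,
    ite_add_zero, Finset.sum_add_distrib, add_assoc]
  congr 2
  rw [Finset.sum_eq_single k (fun x _ hx => by simp [hx]) (by simp), if_pos (by omega), if_pos rfl,
    show n - m - 1 - k = n - m - (k + 1) by omega]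
  ring

lemma Pstar_map_polyInKHom_of_sub_le (hk : n - m ≤ k) :
    (Pstar n m b).map (polyInKHom k).toRingHom = ((Pstar n m b).map (toSub k).toRingHom).map C := by
  simp only [Pstar, Polynomial.map_add, Polynomial.map_pow, Polynomial.map_X, Polynomial.map_sum,
    Polynomial.map_mul, Polynomial.map_C, AlgHom.toRingHom_eq_coe, RingHom.coe_coe, map_mul,
    polyInKHom_X, apply_ite (Polynomial.map _), Polynomial.map_zero]
  have hne : ∀ x : Fin n, ¬((x : ℕ) < n - m ∧ x = k) := fun x h =>
    absurd (h.2 ▸ h.1) (not_lt.2 hk)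
  simp [mul_add, add_mul, ite_add_zero, apply_ite C, mul_ite, ite_mul, ← ite_and, hne]

lemma Pmk_map_polyInKHom {K : ℕ} (hK : (k : ℕ) + 1 = K) (hKm : K ≤ n - m) :
    (Pmk n m b K).map (polyInKHom k).toRingHom =
      ((Pmk n m b K).map (toSub k).toRingHom).map C := by
  have hpow : (X : (MvPolynomial {j : Fin n // j ≠ k} ℂ)[X][X]) ^ (n - K) =
      X ^ m * X ^ (n - m - K) := by
    rw [← pow_add]; congr 1; omega
  simp only [Pmk, Polynomial.map_sub, Polynomial.map_mul, Polynomial.map_C, Polynomial.map_pow,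
    Polynomial.map_X, Pgen_map_polyInKHom k hK, Pstar_map_polyInKHom_of_le_sub k m b hK hKm, hpow]
  simp only [AlgHom.toRingHom_eq_coe, RingHom.coe_coe, MvPolynomial.algHom_C,
    Polynomial.algebraMap_apply, MvPolynomial.algebraMap_eq]
  ring

lemma polyInK_Dtilde : polyInK k (Dtilde n m b) =
    resultant ((Pgen n).map (polyInKHom k).toRingHom) ((Pstar n m b).map (polyInKHom k).toRingHom)
      n (n - m) := by
  rw [resultant_map_map, Dtilde, res_eq_resultant]
  rfl

theorem coeff_polyInK_Dtilde_of_le_sub (hm : 0 < m) {K : ℕ} (hK : (k : ℕ) + 1 = K)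
    (hKm : K ≤ n - m) (hb : b K ≠ 0) (an : {i : Fin n // i ≠ k}) (han : (an : ℕ) = n - 1) :
    (polyInK k (Dtilde n m b)).coeff n =
      MvPolynomial.C ((-1) ^ (n * (n - m - K)) * b K ^ n * (1 - b 0 / b K) ^ K) *
        MvPolynomial.X an ^ (n - m - K) := by
  set f := (Pmk n m b K).map (toSub k).toRingHom
  have hn : 0 < n := by omega
  have han' : (⟨n - 1, by omega⟩ : Fin n) = an := Fin.ext han.symm
  have hscale : MvPolynomial.C (b K) ^ (n - m) * Dtilde n m b =
      resultant (Pmk n m b K) (Pstar n m b) n (n - m) := by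
    rw [Dtilde, res_eq_resultant, Pmk,
      resultant_C_mul_sub_X_pow_mul_left _ _ _ (by omega) (Pstar_natDegree_le m b)]
  have hres : resultant f (C (MvPolynomial.C (b K)) * X ^ (n - m - K)) n (n - m) =
      MvPolynomial.C ((-1) ^ (n * (n - m - K)) * b K ^ n * (b K - b 0) ^ K * b K ^ (n - m - K)) *
        MvPolynomial.X an ^ (n - m - K) := by
    rw [resultant_C_mul_X_pow_right_of_le _ _ (by omega)
      (natDegree_map_le.trans (Pmk_natDegree_le m b (by omega) _)), coeff_map, coeff_map,
      Pmk_coeff_self m b hn (by omega), Pmk_coeff_zero m b hn hm,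
      show n - m - (n - m - K) = K by omega]
    simp only [AlgHom.toRingHom_eq_coe, RingHom.coe_coe, map_mul, MvPolynomial.algHom_C, han',
      toSub_X_of_ne k an.2, map_pow, map_neg, map_one, mul_pow, MvPolynomial.algebraMap_eq,
      Subtype.coe_eta]
    ring
  have hcoeff : MvPolynomial.C (b K) ^ (n - m) * (polyInK k (Dtilde n m b)).coeff n =
      resultant f (C (MvPolynomial.C (b K)) * X ^ (n - m - K)) n (n - m) := by
    rw [← coeff_resultant_map_C_add_C_X_mul_right f ((Pstar n m b).map (toSub k).toRingHom),
      ← Pmk_map_polyInKHom k m b hK hKm, ← Pstar_map_polyInKHom_of_le_sub k m b hK hKm,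
      resultant_map_map, ← hscale, map_mul, map_pow, AlgHom.toRingHom_eq_coe, RingHom.coe_coe,
      polyInKHom_C, ← C_pow, coeff_C_mul]
    rfl
  have hpow : b K ^ (n - m) = b K ^ (n - m - K) * b K ^ K := by
    rw [← pow_add, Nat.sub_add_cancel hKm]
  refine mul_left_cancel₀
    (pow_ne_zero (n - m) ((map_ne_zero_iff _ (MvPolynomial.C_injective _ _)).2 hb)) ?_
  rw [hcoeff, hres, ← mul_assoc, ← map_pow, ← map_mul, hpow, one_sub_div hb, div_pow]
  congr 2
  field_simp

theorem coeff_polyInK_Dtilde_of_sub_lt (hmn : m < n) {K : ℕ} (hK : (k : ℕ) + 1 = K)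
    (hKm : n - m < K) (anm : {i : Fin n // i ≠ k}) (hanm : (anm : ℕ) = n - m - 1) :
    (polyInK k (Dtilde n m b)).coeff (n - m) =
      MvPolynomial.C ((-1) ^ ((n - m) * K) * b (n - m) ^ (n - K) * b 0 ^ K) *
        MvPolynomial.X anm ^ (n - K) := by
  have hanm' : (⟨n - m - 1, by omega⟩ : Fin n) = anm := Fin.ext hanm.symm
  rw [polyInK_Dtilde, Pgen_map_polyInKHom k hK, Pstar_map_polyInKHom_of_sub_le k m b (by omega),
    coeff_resultant_map_C_add_C_X_mul_left,
    resultant_X_pow_left_of_le _ (by omega) (natDegree_map_le.trans (Pstar_natDegree_le m b)),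
    coeff_map, coeff_map, Pstar_coeff_self, Pstar_coeff_zero m b hmn, show n - (n - K) = K by omega]
  simp only [AlgHom.toRingHom_eq_coe, RingHom.coe_coe, map_mul, MvPolynomial.algHom_C, hanm',
    toSub_X_of_ne k anm.2, map_pow, map_neg, map_one, mul_pow, MvPolynomial.algebraMap_eq,
    Subtype.coe_eta]
  ring

end

theorem statement4_general (n m : ℕ) (hm1 : 1 ≤ m) (hm : m ≤ n - 1)
    (b : ℕ → ℂ) (hb0 : ∀ j ≤ n - m, b j ≠ 0) :
    (∀ j : ℕ, 1 ≤ j → j ≤ n - m → ∀ jk : Fin n, (jk : ℕ) = j - 1 →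
      ∀ an : {i : Fin n // i ≠ jk}, ((an : Fin n) : ℕ) = n - 1 →
        ∃ ε : ℂ, (ε = 1 ∨ ε = -1) ∧
          (polyInK jk (Dtilde n m b)).coeff n
            = MvPolynomial.C (ε * b j ^ n * (1 - b 0 / b j) ^ j) *
                MvPolynomial.X an ^ (n - m - j)) ∧
    (∀ s : ℕ, 1 ≤ s → s ≤ m - 1 → ∀ sk : Fin n, (sk : ℕ) = n - m + s - 1 →
      ∀ anm : {i : Fin n // i ≠ sk}, ((anm : Fin n) : ℕ) = n - m - 1 →
        ∃ ε : ℂ, (ε = 1 ∨ ε = -1) ∧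
          (polyInK sk (Dtilde n m b)).coeff (n - m)
            = MvPolynomial.C (ε * b (n - m) ^ (m - s) * b 0 ^ (n - m + s)) *
                MvPolynomial.X anm ^ (m - s)) := by
  refine ⟨fun j hj1 hj2 jk hjk an han => ?_, fun s hs1 hs2 sk hsk anm hanm => ?_⟩
  · exact ⟨_, neg_one_pow_eq_or ℂ _,
      coeff_polyInK_Dtilde_of_le_sub jk m b hm1 (by omega) hj2 (hb0 j hj2) an han⟩
  · have hsk' := coeff_polyInK_Dtilde_of_sub_lt sk m b (by omega) (K := n - m + s) (by omega)
      (by omega) anm hanm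
    rw [show n - (n - m + s) = m - s by omega] at hsk'
    exact ⟨_, neg_one_pow_eq_or ℂ _, hsk'⟩

/-- (i) For `1 ≤ j ≤ n-m`, the coefficient of `a_jⁿ` in `D̃_m` equals
`ε·b_jⁿ·(1-b₀/b_j)^j·aₙ^{n-m-j}` for some sign `ε`. (ii) For `1 ≤ s ≤ m-1`, the coefficient
of `a_{n-m+s}^{n-m}` in `D̃_m` equals `ε·b_{n-m}^{m-s}·b₀^{n-m+s}·a_{n-m}^{m-s}`. -/
theorem statement4 (n m : ℕ) (hn : 4 ≤ n) (hm1 : 1 ≤ m) (hm : m ≤ n - 1)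
    (b : ℕ → ℂ) (hb0 : ∀ j ≤ n - m, b j ≠ 0)
    (hbinj : ∀ i ≤ n - m, ∀ j ≤ n - m, b i = b j → i = j) :
    (∀ j : ℕ, 1 ≤ j → j ≤ n - m → ∀ jk : Fin n, (jk : ℕ) = j - 1 →
      ∀ an : {i : Fin n // i ≠ jk}, ((an : Fin n) : ℕ) = n - 1 →
        ∃ ε : ℂ, (ε = 1 ∨ ε = -1) ∧
          (polyInK jk (Dtilde n m b)).coeff n
            = MvPolynomial.C (ε * b j ^ n * (1 - b 0 / b j) ^ j) *
                MvPolynomial.X an ^ (n - m - j)) ∧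
    (∀ s : ℕ, 1 ≤ s → s ≤ m - 1 → ∀ sk : Fin n, (sk : ℕ) = n - m + s - 1 →
      ∀ anm : {i : Fin n // i ≠ sk}, ((anm : Fin n) : ℕ) = n - m - 1 →
        ∃ ε : ℂ, (ε = 1 ∨ ε = -1) ∧
          (polyInK sk (Dtilde n m b)).coeff (n - m)
            = MvPolynomial.C (ε * b (n - m) ^ (m - s) * b 0 ^ (n - m + s)) *
                MvPolynomial.X anm ^ (m - s)) :=
  statement4_general n m hm1 hm b hb0
end

section
/- Let 2 ≤ m ≤ n−2 and let a⁰ be a point of the set Θ. Then there exist an open neighbourhood U ⊂ ℂⁿ of a⁰, an open neighbourhood V ⊂ ℂ^{n−2} of the point obtained from a⁰ by deleting the coordinates a_{n−m} and aₙ, and complex-analytic functions α, β : V → ℂ such that Θ ∩ U = {a ∈ U : the tuple (a_j)_{j∉{n−m,n}} lies in V, a_{n−m} = α((a_j)_{j∉{n−m,n}}) and aₙ = β((a_j)_{j∉{n−m,n}})}. In particular, near a⁰ the set Θ is a smooth analytic subvariety of ℂⁿ of dimension n−2. -/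
/-!
Along `Θ` the double root `z` of `P_*` is a critical point of `P_*`, and `P_*'` involves neither
`a_{n-m}` nor `aₙ`. Since `z` is a simple root of `P_*'`, the analytic implicit function theorem
writes it as an analytic function `ζ` of the remaining coordinates `x`. The coordinate `a_{n-m}`
enters `P_*`, and `aₙ` enters `P`, only through the constant term, so `P_*(ζ) = 0` and
`P(ζ) = 0` say exactly `a_{n-m} = α(x)` and `aₙ = β(x)`. The remaining conditions defining `Θ`
are open near `a⁰`: the roots of `P` and `P_*` stay in a fixed compact set, away from `z` they
stay simple and distinct by compactness, and near `z` the factorisation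
`P_* = (X - ζ)² · Q` with `Q` nonvanishing keeps `ζ` the only root of `P_*`.
-/

open Polynomial

open Filter Topology Metric
open scoped ContDiff

namespace Polynomial

section Taylor
variable {R : Type*} [CommRing R]

noncomputable def taylorQuot (p : R[X]) (z : R) : R[X] :=
  (taylor z p).divX.divX.comp (X - C z)

theorem eq_taylorQuot (p : R[X]) (z : R) :
    p = C (p.eval z) + C (p.derivative.eval z) * (X - C z) + taylorQuot p z * (X - C z) ^ 2 := by
  set T := taylor z p
  have hT : T = C (T.coeff 0) + C (T.coeff 1) * X + T.divX.divX * X ^ 2 := by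
    conv_lhs => rw [← divX_mul_X_add T, ← divX_mul_X_add T.divX]
    rw [coeff_divX]; ring
  have hcomp : T.comp (X - C z) = p := by
    simp [T, taylor_apply, comp_assoc]
  conv_lhs => rw [← hcomp, hT]
  simp [taylorQuot, T, add_comp, mul_comp]

theorem eval_taylorQuot (p : R[X]) (z w : R) :
    (taylorQuot p z).eval w = (taylor z p).divX.divX.eval (w - z) := by
  simp [taylorQuot, eval_comp]

theorem eq_taylorQuot_mul_of_isRoot {p : R[X]} {z : R} (hp : p.IsRoot z)
    (hp' : p.derivative.IsRoot z) : p = taylorQuot p z * (X - C z) ^ 2 := by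
  simpa [hp.eq_zero, hp'.eq_zero] using eq_taylorQuot p z

end Taylor

variable {K : Type*} [Field K]

theorem rootMultiplicity_eq_one_iff {p : K[X]} (hp : p ≠ 0) {z : K} :
    p.rootMultiplicity z = 1 ↔ p.IsRoot z ∧ ¬ p.derivative.IsRoot z := by
  rw [← rootMultiplicity_pos hp]
  have := (one_lt_rootMultiplicity_iff_isRoot hp (t := z)).not
  constructor
  · intro h
    refine ⟨by omega, fun h' => this.1 (by omega) ⟨(rootMultiplicity_pos hp).1 (by omega), h'⟩⟩
  · rintro ⟨h1, h2⟩
    have := this.2 fun h => h2 h.2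
    omega

/-- `Theta n m b` unfolds to `{a | ∃ z, IsThetaPoint (Pev n a) (Psev n m b a) z}`. -/
def IsThetaPoint (p q : K[X]) (z : K) : Prop :=
  p.IsRoot z ∧ q.rootMultiplicity z = 2 ∧ p.rootMultiplicity z = 1 ∧
    (∀ w, w ≠ z → p.IsRoot w → p.rootMultiplicity w = 1) ∧
    (∀ w, w ≠ z → q.IsRoot w → q.rootMultiplicity w = 1) ∧
    (∀ w, w ≠ z → ¬(p.IsRoot w ∧ q.IsRoot w))

namespace IsThetaPoint

variable {p q : K[X]} {z : K} (h : IsThetaPoint p q z)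
include h

theorem left_ne_zero : p ≠ 0 := by
  rintro rfl; simpa using h.2.2.1

theorem right_ne_zero : q ≠ 0 := by
  rintro rfl; simpa using h.2.1

theorem isRoot_right : q.IsRoot z ∧ q.derivative.IsRoot z :=
  (one_lt_rootMultiplicity_iff_isRoot h.right_ne_zero).1 (by rw [h.2.1]; norm_num)

theorem not_isRoot_and_isRoot_derivative_left (w : K) :
    ¬ (p.IsRoot w ∧ p.derivative.IsRoot w) := fun ⟨hw, hw'⟩ => by
  obtain rfl | hne := eq_or_ne w z
  · exact ((rootMultiplicity_eq_one_iff h.left_ne_zero).1 h.2.2.1).2 hw'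
  · exact ((rootMultiplicity_eq_one_iff h.left_ne_zero).1 (h.2.2.2.1 w hne hw)).2 hw'

theorem not_isRoot_and_isRoot_derivative_right {w : K} (hne : w ≠ z) :
    ¬ (q.IsRoot w ∧ q.derivative.IsRoot w) := fun ⟨hw, hw'⟩ =>
  ((rootMultiplicity_eq_one_iff h.right_ne_zero).1 (h.2.2.2.2.1 w hne hw)).2 hw'

theorem not_isRoot_and_isRoot {w : K} (hne : w ≠ z) : ¬ (p.IsRoot w ∧ q.IsRoot w) :=
  h.2.2.2.2.2 w hne

theorem not_isRoot_taylorQuot : ¬ (taylorQuot q z).IsRoot z := by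
  have hfac := eq_taylorQuot_mul_of_isRoot h.isRoot_right.1 h.isRoot_right.2
  have hQ : taylorQuot q z ≠ 0 := fun h0 => h.right_ne_zero (by rw [hfac, h0, zero_mul])
  intro hroot
  have := rootMultiplicity_mul_X_sub_C_pow hQ (a := z) (n := 2)
  rw [← hfac, h.2.1] at this
  have := (rootMultiplicity_pos hQ).2 hroot
  omega

theorem not_isRoot_derivative_derivative [CharZero K] :
    ¬ q.derivative.derivative.IsRoot z := by
  have h1 : q.derivative.rootMultiplicity z = 1 := by
    rw [derivative_rootMultiplicity_of_root h.isRoot_right.1, h.2.1]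
  have hq' : q.derivative ≠ 0 := by rintro h0; simp [h0] at h1
  exact ((rootMultiplicity_eq_one_iff hq').1 h1).2

end IsThetaPoint

theorem exists_isThetaPoint_iff {p q : K[X]} {S : Set K} {z : K} (hz : z ∈ S)
    (hp : ∀ w, ¬ (p.IsRoot w ∧ p.derivative.IsRoot w))
    (hq : ∀ w ∉ S, ¬ (q.IsRoot w ∧ q.derivative.IsRoot w))
    (hpq : ∀ w ∉ S, ¬ (p.IsRoot w ∧ q.IsRoot w))
    (hcrit : ∀ w ∈ S, q.derivative.IsRoot w ↔ w = z)
    (hquot : ∀ w ∈ S, ¬ (taylorQuot q z).IsRoot w) :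
    (∃ w, IsThetaPoint p q w) ↔ p.IsRoot z ∧ q.IsRoot z := by
  have hp0 : p ≠ 0 := by rintro rfl; exact hp z (by simp)
  have hq0 : q ≠ 0 := by rintro rfl; exact hquot z hz (by simp [taylorQuot])
  constructor
  · rintro ⟨w, hw⟩
    have hwS : w ∈ S := by_contra fun hwS => hpq w hwS ⟨hw.1, hw.isRoot_right.1⟩
    obtain rfl := (hcrit w hwS).1 hw.isRoot_right.2
    exact ⟨hw.1, hw.isRoot_right.1⟩
  rintro ⟨hpz, hqz⟩
  have hfac := eq_taylorQuot_mul_of_isRoot hqz ((hcrit z hz).2 rfl)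
  have hQ : taylorQuot q z ≠ 0 := fun h0 => hq0 (by rw [hfac, h0, zero_mul])
  have hout : ∀ w, w ≠ z → q.IsRoot w → w ∉ S := fun w hne hw hwS => hquot w hwS <| by
    rw [hfac, IsRoot, eval_mul, eval_pow, eval_sub, eval_X, eval_C] at hw
    exact (mul_eq_zero.1 hw).resolve_right (pow_ne_zero _ (sub_ne_zero.2 hne))
  refine ⟨z, hpz, ?_, ?_, fun w _ hw => ?_, fun w hne hw => ?_, fun w hne hw => ?_⟩
  · rw [hfac, rootMultiplicity_mul_X_sub_C_pow hQ, rootMultiplicity_eq_zero (hquot z hz)]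
  · exact (rootMultiplicity_eq_one_iff hp0).2 ⟨hpz, fun h' => hp z ⟨hpz, h'⟩⟩
  · exact (rootMultiplicity_eq_one_iff hp0).2 ⟨hw, fun h' => hp w ⟨hw, h'⟩⟩
  · exact (rootMultiplicity_eq_one_iff hq0).2 ⟨hw, fun h' => hq w (hout w hne hw) ⟨hw, h'⟩⟩
  · exact hpq w (hout w hne hw.2) hw

section Families
variable {T 𝕜 : Type*} [TopologicalSpace T] [NormedField 𝕜] {f : T → 𝕜[X]} {t₀ : T} {N : ℕ}

theorem continuousAt_eval_of_continuousAt_coeff (hdeg : ∀ t, (f t).natDegree ≤ N)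
    (hcoeff : ∀ k, ContinuousAt (fun t => (f t).coeff k) t₀) (w : 𝕜) :
    ContinuousAt (fun v : T × 𝕜 => (f v.1).eval v.2) (t₀, w) := by
  have hsum : (fun v : T × 𝕜 => (f v.1).eval v.2) =
      fun v => ∑ i ∈ Finset.range (N + 1), (f v.1).coeff i * v.2 ^ i :=
    _root_.funext fun v => eval_eq_sum_range' (Nat.lt_succ_of_le (hdeg v.1)) v.2
  rw [hsum]
  refine tendsto_finsetSum _ fun i _ => ?_
  have := (hcoeff i).comp (x := (t₀, w)) continuousAt_fst
  exact this.mul (continuousAt_snd.pow i)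

theorem continuousAt_eval_derivative_of_continuousAt_coeff (hdeg : ∀ t, (f t).natDegree ≤ N)
    (hcoeff : ∀ k, ContinuousAt (fun t => (f t).coeff k) t₀) (w : 𝕜) :
    ContinuousAt (fun v : T × 𝕜 => (f v.1).derivative.eval v.2) (t₀, w) :=
  continuousAt_eval_of_continuousAt_coeff (f := fun t => (f t).derivative)
    (fun t => (natDegree_derivative_le _).trans ((Nat.sub_le _ _).trans (hdeg t)))
    (fun k => by simp only [coeff_derivative]; exact (hcoeff (k + 1)).mul continuousAt_const) w

theorem continuousAt_eval_taylorQuot_of_continuousAt_coeff (hdeg : ∀ t, (f t).natDegree ≤ N)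
    (hcoeff : ∀ k, ContinuousAt (fun t => (f t).coeff k) t₀) {ζ : T → 𝕜}
    (hζ : ContinuousAt ζ t₀) (w : 𝕜) :
    ContinuousAt (fun v : T × 𝕜 => (taylorQuot (f v.1) (ζ v.1)).eval v.2) (t₀, w) := by
  have hhasse : ∀ k, ContinuousAt (fun v : T × 𝕜 => (hasseDeriv k (f v.1)).eval v.2)
      (t₀, ζ t₀) := fun k =>
    continuousAt_eval_of_continuousAt_coeff (f := fun t => hasseDeriv k (f t))
      (fun t => (natDegree_hasseDeriv_le _ _).trans ((Nat.sub_le _ _).trans (hdeg t)))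
      (fun j => by simp only [hasseDeriv_coeff]; exact continuousAt_const.mul (hcoeff (j + k))) _
  have hquot := continuousAt_eval_of_continuousAt_coeff
    (f := fun v : T × 𝕜 => (taylor v.2 (f v.1)).divX.divX) (t₀ := (t₀, ζ t₀))
    (fun v => (natDegree_divX_le.trans natDegree_divX_le).trans
      ((natDegree_taylor _ _).trans_le (hdeg v.1)))
    (fun k => by simpa only [coeff_divX, taylor_coeff] using hhasse (k + 1 + 1)) (w - ζ t₀)
  simp_rw [eval_taylorQuot]
  exact hquot.comp_of_eq ((continuousAt_fst.prodMk (hζ.comp continuousAt_fst)).prodMk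
    (continuousAt_snd.sub (hζ.comp continuousAt_fst))) rfl

theorem eventually_forall_mem_not_isRoot_and {g : T → 𝕜[X]} {s : Set 𝕜} (hs : IsCompact s)
    (hf : ∀ w ∈ s, ContinuousAt (fun v : T × 𝕜 => (f v.1).eval v.2) (t₀, w))
    (hg : ∀ w ∈ s, ContinuousAt (fun v : T × 𝕜 => (g v.1).eval v.2) (t₀, w))
    (h₀ : ∀ w ∈ s, ¬ ((f t₀).IsRoot w ∧ (g t₀).IsRoot w)) :
    ∀ᶠ t in 𝓝 t₀, ∀ w ∈ s, ¬ ((f t).IsRoot w ∧ (g t).IsRoot w) :=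
  hs.eventually_forall_of_forall_eventually fun w hw => by
    rcases not_and_or.1 (h₀ w hw) with hfw | hgw
    · exact ((hf w hw).eventually_ne hfw).mono fun _ hv h => hv h.1
    · exact ((hg w hw).eventually_ne hgw).mono fun _ hv h => hv h.2

theorem exists_eventually_isRoot_mem_closedBall
    (hdeg : ∀ t, (f t).natDegree ≤ (f t₀).natDegree)
    (hcoeff : ∀ k, ContinuousAt (fun t => (f t).coeff k) t₀) (h₀ : f t₀ ≠ 0) :
    ∃ R : ℝ, ∀ᶠ t in 𝓝 t₀, ∀ w, (f t).IsRoot w → w ∈ closedBall 0 R := by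
  set N := (f t₀).natDegree
  set c := (f t₀).leadingCoeff
  have hc : 0 < ‖c‖₊ := by simpa [c] using h₀
  refine ⟨(((Finset.range N).sup fun k => ‖(f t₀).coeff k‖₊ + 1) / (‖c‖₊ / 2) + 1 : NNReal), ?_⟩
  have hlead : ∀ᶠ t in 𝓝 t₀, ‖c‖₊ / 2 < ‖(f t).coeff N‖₊ :=
    (hcoeff N).nnnorm.eventually (lt_mem_nhds (half_lt_self hc))
  have hlow : ∀ᶠ t in 𝓝 t₀, ∀ k ∈ Finset.range N, ‖(f t).coeff k‖₊ ≤ ‖(f t₀).coeff k‖₊ + 1 :=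
    (Filter.eventually_all_finset _).2 fun k _ =>
      (hcoeff k).nnnorm.eventually (gt_mem_nhds (lt_add_one _)) |>.mono fun _ => le_of_lt
  filter_upwards [hlead, hlow] with t ht hlow w hw
  have hne : (f t).coeff N ≠ 0 := nnnorm_pos.1 (pos_of_gt ht)
  have hdeg_t : (f t).natDegree = N := le_antisymm (hdeg t) (le_natDegree_of_ne_zero hne)
  have hft : f t ≠ 0 := fun h => hne (by simp [h])
  have hroot := hw.norm_lt_cauchyBound hft
  rw [cauchyBound, leadingCoeff, hdeg_t] at hroot
  rw [mem_closedBall_zero_iff, ← coe_nnnorm, NNReal.coe_le_coe]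
  refine hroot.le.trans ?_
  gcongr with k hk
  exact hlow k hk

end Families

variable {T : Type*} [TopologicalSpace T]

theorem eventually_exists_isThetaPoint_iff {p q : T → ℂ[X]} {ζ : T → ℂ} {t₀ : T}
    (hpdeg : ∀ t, (p t).natDegree ≤ (p t₀).natDegree)
    (hpcoeff : ∀ k, ContinuousAt (fun t => (p t).coeff k) t₀)
    (hqdeg : ∀ t, (q t).natDegree ≤ (q t₀).natDegree)
    (hqcoeff : ∀ k, ContinuousAt (fun t => (q t).coeff k) t₀) (hζ : ContinuousAt ζ t₀)
    (hcrit : ∀ᶠ v in 𝓝 (t₀, ζ t₀), (q v.1).derivative.IsRoot v.2 ↔ ζ v.1 = v.2)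
    (h₀ : IsThetaPoint (p t₀) (q t₀) (ζ t₀)) :
    ∀ᶠ t in 𝓝 t₀, (∃ z, IsThetaPoint (p t) (q t) z) ↔ (p t).IsRoot (ζ t) ∧ (q t).IsRoot (ζ t) := by
  set z₀ := ζ t₀
  obtain ⟨Rp, hRp⟩ := exists_eventually_isRoot_mem_closedBall hpdeg hpcoeff h₀.left_ne_zero
  obtain ⟨Rq, hRq⟩ := exists_eventually_isRoot_mem_closedBall hqdeg hqcoeff h₀.right_ne_zero
  obtain ⟨ε, hε, hcritε, hquotε⟩ : ∃ ε > 0,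
      (∀ᶠ t in 𝓝 t₀, ∀ w ∈ ball z₀ ε, (q t).derivative.IsRoot w ↔ ζ t = w) ∧
        ∀ w ∈ closedBall z₀ ε, ¬ (taylorQuot (q t₀) z₀).IsRoot w := by
    rw [nhds_prod_eq, eventually_prod_iff] at hcrit
    obtain ⟨pa, hpa, pb, hpb, hab⟩ := hcrit
    have hquot : ∀ᶠ w in 𝓝 z₀, ¬ (taylorQuot (q t₀) z₀).IsRoot w :=
      (taylorQuot (q t₀) z₀).continuous.continuousAt.eventually_ne h₀.not_isRoot_taylorQuot
    obtain ⟨ε, hε, hball⟩ := Metric.eventually_nhds_iff_ball.1 (hpb.and hquot)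
    exact ⟨ε / 2, half_pos hε,
      hpa.mono fun t ht w hw => hab ht (hball w (ball_subset_ball (half_le_self hε.le) hw)).1,
      fun w hw => (hball w (closedBall_subset_ball (half_lt_self hε) hw)).2⟩
  have hK : IsCompact (closedBall 0 Rq \ ball z₀ ε) := (isCompact_closedBall _ _).diff isOpen_ball
  have hne : ∀ w ∈ closedBall 0 Rq \ ball z₀ ε, w ≠ z₀ := fun w hw h => hw.2 (h ▸ mem_ball_self hε)
  have hp := eventually_forall_mem_not_isRoot_and (g := fun t => (p t).derivative)
    (isCompact_closedBall 0 Rp)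
    (fun w _ => continuousAt_eval_of_continuousAt_coeff hpdeg hpcoeff w)
    (fun w _ => continuousAt_eval_derivative_of_continuousAt_coeff hpdeg hpcoeff w)
    fun w _ => h₀.not_isRoot_and_isRoot_derivative_left w
  have hq := eventually_forall_mem_not_isRoot_and (g := fun t => (q t).derivative) hK
    (fun w _ => continuousAt_eval_of_continuousAt_coeff hqdeg hqcoeff w)
    (fun w _ => continuousAt_eval_derivative_of_continuousAt_coeff hqdeg hqcoeff w)
    fun w hw => h₀.not_isRoot_and_isRoot_derivative_right (hne w hw)
  have hpq := eventually_forall_mem_not_isRoot_and hK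
    (fun w _ => continuousAt_eval_of_continuousAt_coeff hpdeg hpcoeff w)
    (fun w _ => continuousAt_eval_of_continuousAt_coeff hqdeg hqcoeff w)
    fun w hw => h₀.not_isRoot_and_isRoot (hne w hw)
  -- `q t = taylorQuot (q t) (ζ t) * (X - ζ t) ^ 2`, so this isolates `ζ t` among the roots.
  have hquot : ∀ᶠ t in 𝓝 t₀, ∀ w ∈ closedBall z₀ ε, ¬ (taylorQuot (q t) (ζ t)).IsRoot w :=
    (isCompact_closedBall _ _).eventually_forall_of_forall_eventually fun w hw =>
      (continuousAt_eval_taylorQuot_of_continuousAt_coeff hqdeg hqcoeff hζ w).eventually_ne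
        (hquotε w hw)
  filter_upwards [hRp, hRq, hcritε, hp, hq, hpq, hquot, hζ.eventually (ball_mem_nhds z₀ hε)]
    with t hRp hRq hcritε hp hq hpq hquot hζt
  exact exists_isThetaPoint_iff hζt (fun w hw => hp w (hRp w hw.1) hw)
    (fun w hwS hw => hq w ⟨hRq w hw.1, hwS⟩ hw) (fun w hwS hw => hpq w ⟨hRq w hw.2, hwS⟩ hw)
    (fun w hw => (hcritε w hw).trans eq_comm) fun w hw => hquot w (ball_subset_closedBall hw)

end Polynomial

theorem AnalyticAt.exists_implicitFunction {E : Type*} [NormedAddCommGroup E] [NormedSpace ℂ E]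
    [CompleteSpace E] {g : E × ℂ → ℂ} {u : E × ℂ} (hg : AnalyticAt ℂ g u) {c : ℂ}
    (hc : HasDerivAt (fun z => g (u.1, z)) c u.2) (hc0 : c ≠ 0) :
    ∃ ζ : E → ℂ, ζ u.1 = u.2 ∧ AnalyticAt ℂ ζ u.1 ∧ ∀ᶠ v in 𝓝 u, g v = g u ↔ ζ v.1 = v.2 := by
  have hcd : ContDiffAt ℂ ω g u := hg.contDiffAt
  have hinv : (fderiv ℂ g u ∘L ContinuousLinearMap.inr ℂ E ℂ).IsInvertible := by
    have h1 : HasDerivAt (fun z => g (u.1, z)) (fderiv ℂ g u (0, 1)) u.2 := by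
      have := hg.differentiableAt.hasFDerivAt.comp_hasDerivAt u.2
        ((hasDerivAt_const u.2 u.1).prodMk (hasDerivAt_id u.2))
      exact this
    have h2 : fderiv ℂ g u ∘L ContinuousLinearMap.inr ℂ E ℂ
        = (ContinuousLinearEquiv.unitsEquivAut ℂ (Units.mk0 c hc0) : ℂ →L[ℂ] ℂ) := by
      ext
      simp [h1.unique hc]
    rw [h2]
    exact ContinuousLinearMap.isInvertible_equiv
  exact ⟨hcd.implicitFunction (by simp) hinv, hcd.implicitFunction_apply_self _ _,
    (hcd.contDiffAt_implicitFunction _ _).analyticAt,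
    hcd.eventually_apply_eq_iff_implicitFunction _ _⟩

theorem Polynomial.degree_sum_lt {R ι : Type*} [Semiring R] {s : Finset ι} {f : ι → R[X]} {d : ℕ}
    (h : ∀ i ∈ s, (f i).degree < d) : (∑ i ∈ s, f i).degree < d :=
  (degree_sum_le _ _).trans_lt ((Finset.sup_lt_iff (WithBot.bot_lt_coe d)).2 h)

section Specific
variable {n m : ℕ} {b : ℕ → ℂ}

theorem Pev_eq (a : Fin n → ℂ) :
    Pev n a = X ^ n + ∑ i : Fin n, C (a i) * X ^ (n - 1 - (i : ℕ)) := by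
  simp [Pev, Pgen, Polynomial.map_sum]

theorem Psev_eq (a : Fin n → ℂ) :
    Psev n m b a = C (b 0) * X ^ (n - m) +
      ∑ i : Fin n, if (i : ℕ) < n - m then
        C (b ((i : ℕ) + 1) * a i) * X ^ (n - m - 1 - (i : ℕ)) else 0 := by
  simp [Psev, Pstar, Polynomial.map_sum, apply_ite]

theorem degree_Pev_sub_lt (a : Fin n → ℂ) : (Pev n a - X ^ n).degree < (n : WithBot ℕ) := by
  rw [Pev_eq, add_sub_cancel_left]
  exact degree_sum_lt fun i _ => (degree_C_mul_X_pow_le _ _).trans_lt (by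
    exact_mod_cast (by omega : n - 1 - (i : ℕ) < n))

theorem degree_Psev_sub_lt (a : Fin n → ℂ) :
    (Psev n m b a - C (b 0) * X ^ (n - m)).degree < ((n - m : ℕ) : WithBot ℕ) := by
  rw [Psev_eq, add_sub_cancel_left]
  refine degree_sum_lt fun i _ => ?_
  split_ifs with hi
  · exact (degree_C_mul_X_pow_le _ _).trans_lt
      (by exact_mod_cast (by omega : n - m - 1 - (i : ℕ) < n - m))
  · exact degree_zero.trans_lt (WithBot.bot_lt_coe _)

theorem natDegree_Pev (a : Fin n → ℂ) : (Pev n a).natDegree = n := by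
  rw [← sub_add_cancel (Pev n a) (X ^ n), add_comm, natDegree_add_eq_left_of_degree_lt,
    natDegree_X_pow]
  rw [degree_X_pow]; exact degree_Pev_sub_lt a

theorem natDegree_Psev (hb : b 0 ≠ 0) (a : Fin n → ℂ) :
    (Psev n m b a).natDegree = n - m := by
  rw [← sub_add_cancel (Psev n m b a) (C (b 0) * X ^ (n - m)), add_comm,
    natDegree_add_eq_left_of_degree_lt, natDegree_C_mul_X_pow _ _ hb]
  rw [degree_C_mul_X_pow _ hb]; exact degree_Psev_sub_lt a

theorem Pev_add_single (a : Fin n → ℂ) (i : Fin n) (t : ℂ) :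
    Pev n (a + Pi.single i t) = Pev n a + C t * X ^ (n - 1 - (i : ℕ)) := by
  simp only [Pev_eq, Pi.add_apply, C_add, add_mul, Finset.sum_add_distrib, Pi.single_apply,
    apply_ite C, C_0, ite_mul, zero_mul, Finset.sum_ite_eq', Finset.mem_univ, if_true]
  ring

theorem Psev_add_single (a : Fin n → ℂ) (i : Fin n) (s : ℂ) :
    Psev n m b (a + Pi.single i s) = Psev n m b a +
      if (i : ℕ) < n - m then C (b ((i : ℕ) + 1) * s) * X ^ (n - m - 1 - (i : ℕ)) else 0 := by
  have hterm : ∀ j : Fin n, (if (j : ℕ) < n - m then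
      C (b ((j : ℕ) + 1) * (a + Pi.single i s : Fin n → ℂ) j) * X ^ (n - m - 1 - (j : ℕ)) else 0) =
      (if (j : ℕ) < n - m then C (b ((j : ℕ) + 1) * a j) * X ^ (n - m - 1 - (j : ℕ)) else 0) +
      if j = i then (if (i : ℕ) < n - m then
        C (b ((i : ℕ) + 1) * s) * X ^ (n - m - 1 - (i : ℕ)) else 0) else 0 := by
    intro j
    obtain rfl | hj := eq_or_ne j i
    · split_ifs <;> simp_all [mul_add, add_mul]
    · simp [hj]
  rw [Psev_eq, Psev_eq, Finset.sum_congr rfl fun j _ => hterm j, Finset.sum_add_distrib,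
    Finset.sum_ite_eq' Finset.univ i, if_pos (Finset.mem_univ i), add_assoc]

end Specific

section MapEval
variable {σ : Type*}

theorem Polynomial.continuous_coeff_map_eval (F : (MvPolynomial σ ℂ)[X]) (k : ℕ) :
    Continuous fun a : σ → ℂ => (F.map (MvPolynomial.eval a)).coeff k := by
  simpa only [coeff_map] using MvPolynomial.continuous_eval _

theorem Polynomial.analyticAt_eval_map [Fintype σ] (F : (MvPolynomial σ ℂ)[X]) (v : (σ → ℂ) × ℂ) :
    AnalyticAt ℂ (fun v : (σ → ℂ) × ℂ => (F.map (MvPolynomial.eval v.1)).eval v.2) v := by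
  simp_rw [eval_map, eval₂_eq_sum_range]
  exact Finset.analyticAt_fun_sum _ fun i _ =>
    ((AnalyticOnNhd.eval_mvPolynomial _ _ trivial).comp analyticAt_fst).mul (analyticAt_snd.pow i)

end MapEval

section InsertTwo
variable {ι M : Type*} [DecidableEq ι] (i k : ι)

def insertTwo (x : {j : ι // j ≠ i ∧ j ≠ k} → M) (s t : M) : ι → M :=
  fun j => if h₁ : j = i then s else if h₂ : j = k then t else x ⟨j, h₁, h₂⟩

theorem insertTwo_restrict (a : ι → M) : insertTwo i k (fun j => a j.1) (a i) (a k) = a := by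
  funext j
  unfold insertTwo
  split_ifs with h₁ h₂
  · rw [h₁]
  · rw [h₂]
  · rfl

variable {i k} [AddZeroClass M] (x : {j : ι // j ≠ i ∧ j ≠ k} → M) (s t : M)

theorem insertTwo_eq_add_single_left :
    insertTwo i k x s t = insertTwo i k x 0 t + Pi.single i s := by
  funext j
  unfold insertTwo
  by_cases h₁ : j = i
  · simp [h₁]
  · simp [h₁]

theorem insertTwo_eq_add_single_right (hik : i ≠ k) :
    insertTwo i k x s t = insertTwo i k x s 0 + Pi.single k t := by
  funext j
  unfold insertTwo
  by_cases h₂ : j = k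
  · simp [h₂, hik.symm]
  · simp [h₂]

end InsertTwo

theorem AnalyticAt.insertTwo {ι E : Type*} [DecidableEq ι] [Fintype ι] [NormedAddCommGroup E]
    [NormedSpace ℂ E] {i k : ι} {x : E → {j : ι // j ≠ i ∧ j ≠ k} → ℂ} {s t : E → ℂ} {e : E}
    (hx : AnalyticAt ℂ x e) (hs : AnalyticAt ℂ s e) (ht : AnalyticAt ℂ t e) :
    AnalyticAt ℂ (fun e => insertTwo i k (x e) (s e) (t e)) e := by
  refine analyticAt_pi_iff.2 fun j => ?_
  unfold _root_.insertTwo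
  by_cases h₁ : j = i
  · simpa [h₁] using hs
  by_cases h₂ : j = k
  · subst h₂
    simpa [h₁] using ht
  simpa [h₁, h₂] using analyticAt_pi_iff.1 hx ⟨j, h₁, h₂⟩

section ThetaGraphFunctions
variable (n m : ℕ) (b : ℕ → ℂ) (inm iN : Fin n) (ζ : ({j : Fin n // j ≠ inm ∧ j ≠ iN} → ℂ) → ℂ)

/-- The functions `α` and `β` of the theorem: for `ζ x` the double root of `P_*`, they solve
`P_*(ζ x) = 0` for `a_{n-m}` and then `P(ζ x) = 0` for `aₙ`. -/
noncomputable def thetaAlpha (x : {j : Fin n // j ≠ inm ∧ j ≠ iN} → ℂ) : ℂ :=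
  -(Psev n m b (insertTwo inm iN x 0 0)).eval (ζ x) / b (n - m)

noncomputable def thetaBeta (x : {j : Fin n // j ≠ inm ∧ j ≠ iN} → ℂ) : ℂ :=
  -(Pev n (insertTwo inm iN x (thetaAlpha n m b inm iN ζ x) 0)).eval (ζ x)

variable {n m b inm iN ζ} {x : {j : Fin n // j ≠ inm ∧ j ≠ iN} → ℂ}

theorem analyticAt_thetaAlpha (hζ : AnalyticAt ℂ ζ x) :
    AnalyticAt ℂ (thetaAlpha n m b inm iN ζ) x := by
  have hins : AnalyticAt ℂ (fun y => insertTwo inm iN y (0 : ℂ) 0) x :=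
    analyticAt_id.insertTwo analyticAt_const analyticAt_const
  exact ((analyticAt_eval_map (Pstar n m b) _).comp₂ hins hζ).neg.div_const

theorem analyticAt_thetaBeta (hζ : AnalyticAt ℂ ζ x) :
    AnalyticAt ℂ (thetaBeta n m b inm iN ζ) x := by
  have hins : AnalyticAt ℂ (fun y => insertTwo inm iN y (thetaAlpha n m b inm iN ζ y) 0) x :=
    analyticAt_id.insertTwo (analyticAt_thetaAlpha hζ) analyticAt_const
  exact ((analyticAt_eval_map (Pgen n) _).comp₂ hins hζ).neg

end ThetaGraphFunctions

section ThetaGraph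
variable {n m : ℕ} {b : ℕ → ℂ} {inm iN : Fin n}
  (hm : 1 ≤ m) (hmn : m < n) (hinm : (inm : ℕ) = n - m - 1) (hiN : (iN : ℕ) = n - 1)
include hm hmn hinm hiN

theorem Psev_insertTwo (x : {j : Fin n // j ≠ inm ∧ j ≠ iN} → ℂ) (s t : ℂ) :
    Psev n m b (insertTwo inm iN x s t) =
      Psev n m b (insertTwo inm iN x 0 0) + C (b (n - m) * s) := by
  have hne : inm ≠ iN := fun h => by rw [h] at hinm; omega
  rw [insertTwo_eq_add_single_left, Psev_add_single, insertTwo_eq_add_single_right x 0 t hne,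
    Psev_add_single, if_neg (by omega), if_pos (by omega), add_zero, hinm,
    Nat.sub_add_cancel (by omega : 1 ≤ n - m), Nat.sub_self, pow_zero, mul_one]

theorem Pev_insertTwo (x : {j : Fin n // j ≠ inm ∧ j ≠ iN} → ℂ) (s t : ℂ) :
    Pev n (insertTwo inm iN x s t) = Pev n (insertTwo inm iN x s 0) + C t := by
  have hne : inm ≠ iN := fun h => by rw [h] at hinm; omega
  rw [insertTwo_eq_add_single_right x s t hne, Pev_add_single, hiN, Nat.sub_self, pow_zero, mul_one]

theorem derivative_Psev_eq (a : Fin n → ℂ) :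
    (Psev n m b a).derivative =
      (Psev n m b (insertTwo inm iN (fun j => a j.1) 0 0)).derivative := by
  conv_lhs => rw [← insertTwo_restrict inm iN a]
  rw [Psev_insertTwo hm hmn hinm hiN, derivative_add, derivative_C, add_zero]

theorem isRoot_Pev_and_isRoot_Psev_iff (hb : b (n - m) ≠ 0)
    (ζ : ({j : Fin n // j ≠ inm ∧ j ≠ iN} → ℂ) → ℂ) (a : Fin n → ℂ) :
    (Pev n a).IsRoot (ζ (fun j => a j.1)) ∧ (Psev n m b a).IsRoot (ζ (fun j => a j.1)) ↔
      a inm = thetaAlpha n m b inm iN ζ (fun j => a j.1) ∧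
        a iN = thetaBeta n m b inm iN ζ (fun j => a j.1) := by
  set x : {j : Fin n // j ≠ inm ∧ j ≠ iN} → ℂ := fun j => a j.1
  have ha := insertTwo_restrict inm iN a
  have hP : (Pev n a).eval (ζ x) = (Pev n (insertTwo inm iN x (a inm) 0)).eval (ζ x) + a iN := by
    conv_lhs => rw [← ha]
    rw [Pev_insertTwo hm hmn hinm hiN, eval_add, eval_C]
  have hPs : (Psev n m b a).eval (ζ x) =
      (Psev n m b (insertTwo inm iN x 0 0)).eval (ζ x) + b (n - m) * a inm := by
    conv_lhs => rw [← ha]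
    rw [Psev_insertTwo hm hmn hinm hiN, eval_add, eval_C]
  simp only [IsRoot, hP, hPs, thetaBeta, thetaAlpha]
  constructor
  · rintro ⟨hp, hq⟩
    have hα : a inm = -(Psev n m b (insertTwo inm iN x 0 0)).eval (ζ x) / b (n - m) := by
      field_simp; linear_combination hq
    exact ⟨hα, by rw [← hα]; linear_combination hp⟩
  · rintro ⟨hα, hβ⟩
    refine ⟨by rw [hβ, ← hα]; ring, by rw [hα]; field_simp; ring⟩

theorem exists_eventually_mem_Theta_iff (hb0 : b 0 ≠ 0) (hbnm : b (n - m) ≠ 0)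
    {a₀ : Fin n → ℂ} (ha₀ : a₀ ∈ Theta n m b) :
    ∃ ζ : ({j : Fin n // j ≠ inm ∧ j ≠ iN} → ℂ) → ℂ, AnalyticAt ℂ ζ (fun j => a₀ j.1) ∧
      ∀ᶠ a in 𝓝 a₀, a ∈ Theta n m b ↔ a inm = thetaAlpha n m b inm iN ζ (fun j => a j.1) ∧
        a iN = thetaBeta n m b inm iN ζ (fun j => a j.1) := by
  obtain ⟨z₀, hz₀⟩ : ∃ z, IsThetaPoint (Pev n a₀) (Psev n m b a₀) z := ha₀
  set proj : (Fin n → ℂ) → {j : Fin n // j ≠ inm ∧ j ≠ iN} → ℂ := fun a j => a j.1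
  set g : ({j : Fin n // j ≠ inm ∧ j ≠ iN} → ℂ) × ℂ → ℂ :=
    fun v => (Psev n m b (insertTwo inm iN v.1 0 0)).derivative.eval v.2
  have hg : ∀ a z, g (proj a, z) = (Psev n m b a).derivative.eval z := fun a z => by
    rw [derivative_Psev_eq hm hmn hinm hiN a]
  have hg_an : AnalyticAt ℂ g (proj a₀, z₀) := by
    have hins : AnalyticAt ℂ (fun v : ({j : Fin n // j ≠ inm ∧ j ≠ iN} → ℂ) × ℂ =>
        insertTwo inm iN v.1 (0 : ℂ) 0) (proj a₀, z₀) :=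
      analyticAt_fst.insertTwo analyticAt_const analyticAt_const
    simp only [g, Psev, derivative_map]
    exact (analyticAt_eval_map (derivative (Pstar n m b)) _).comp₂ hins analyticAt_snd
  have hg_deriv : HasDerivAt (fun z => g (proj a₀, z))
      ((Psev n m b a₀).derivative.derivative.eval z₀) z₀ := by
    simp only [hg]
    exact Polynomial.hasDerivAt _ _
  obtain ⟨ζ, hζ₀, hζ, hcrit⟩ :=
    hg_an.exists_implicitFunction hg_deriv hz₀.not_isRoot_derivative_derivative
  simp only at hζ₀ hζ
  have hproj : Continuous proj := continuous_pi fun j => continuous_apply j.1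
  have hcrit' : ∀ᶠ v in 𝓝 (a₀, ζ (proj a₀)),
      (Psev n m b v.1).derivative.IsRoot v.2 ↔ ζ (proj v.1) = v.2 := by
    rw [hζ₀]
    filter_upwards [((hproj.prodMap continuous_id).tendsto (a₀, z₀)).eventually hcrit] with v hv
    simp only [Prod.map, id, hg, hz₀.isRoot_right.2.eq_zero] at hv
    exact hv
  refine ⟨ζ, hζ, ?_⟩
  filter_upwards [eventually_exists_isThetaPoint_iff (p := Pev n) (q := Psev n m b)
    (ζ := fun a => ζ (proj a))
    (fun a => (natDegree_Pev a).trans (natDegree_Pev a₀).symm |>.le)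
    (fun k => (continuous_coeff_map_eval (Pgen n) k).continuousAt)
    (fun a => (natDegree_Psev hb0 a).trans (natDegree_Psev hb0 a₀).symm |>.le)
    (fun k => (continuous_coeff_map_eval (Pstar n m b) k).continuousAt)
    (hζ.continuousAt.comp hproj.continuousAt) hcrit' (hζ₀ ▸ hz₀)] with a ha
  exact ha.trans (isRoot_Pev_and_isRoot_Psev_iff hm hmn hinm hiN hbnm ζ a)

end ThetaGraph

theorem statement13_general (n m : ℕ) (hm2 : 2 ≤ m) (hm : m ≤ n - 2)
    (b : ℕ → ℂ) (hb0 : ∀ j ≤ n - m, b j ≠ 0)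
    (a0 : Fin n → ℂ) (ha0 : a0 ∈ Theta n m b)
    (inm iN : Fin n) (hinm : (inm : ℕ) = n - m - 1) (hiN : (iN : ℕ) = n - 1) :
    ∃ (U : Set (Fin n → ℂ)) (V : Set ({j : Fin n // j ≠ inm ∧ j ≠ iN} → ℂ))
      (α β : ({j : Fin n // j ≠ inm ∧ j ≠ iN} → ℂ) → ℂ),
      IsOpen U ∧ a0 ∈ U ∧ IsOpen V ∧ (fun j => a0 j.1) ∈ V ∧
      AnalyticOnNhd ℂ α V ∧ AnalyticOnNhd ℂ β V ∧
      Theta n m b ∩ U =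
        {a ∈ U | (fun j : {j : Fin n // j ≠ inm ∧ j ≠ iN} => a j.1) ∈ V ∧
          a inm = α (fun j => a j.1) ∧ a iN = β (fun j => a j.1)} := by
  obtain ⟨ζ, hζ, hΘ⟩ := exists_eventually_mem_Theta_iff (by omega) (by omega) hinm hiN
    (hb0 0 (Nat.zero_le _)) (hb0 _ le_rfl) ha0
  obtain ⟨V, hVζ, hVo, hx₀V⟩ := _root_.eventually_nhds_iff.1 hζ.eventually_analyticAt
  obtain ⟨U, hUΘ, hUo, ha₀U⟩ := _root_.eventually_nhds_iff.1 hΘ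
  set proj : (Fin n → ℂ) → {j : Fin n // j ≠ inm ∧ j ≠ iN} → ℂ := fun a j => a j.1
  have hproj : Continuous proj := continuous_pi fun j => continuous_apply j.1
  refine ⟨U ∩ proj ⁻¹' V, V, thetaAlpha n m b inm iN ζ, thetaBeta n m b inm iN ζ,
    hUo.inter (hVo.preimage hproj), ⟨ha₀U, hx₀V⟩, hVo, hx₀V,
    fun x hx => analyticAt_thetaAlpha (hVζ x hx), fun x hx => analyticAt_thetaBeta (hVζ x hx), ?_⟩
  ext a
  simp only [Set.mem_inter_iff, Set.mem_preimage]
  constructor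
  · rintro ⟨ha, haU, haV⟩
    exact ⟨⟨haU, haV⟩, haV, (hUΘ a haU).1 ha⟩
  · rintro ⟨⟨haU, haV⟩, -, hgraph⟩
    exact ⟨(hUΘ a haU).2 hgraph, haU, haV⟩

/-- Near a point of `Θ`, the set `Θ` is the graph of a pair of analytic
functions expressing `a_{n-m}` and `aₙ` in terms of the remaining `n-2` variables; in
particular it is a smooth analytic subvariety of dimension `n-2`. -/
theorem statement13 (n m : ℕ) (hn : 4 ≤ n) (hm2 : 2 ≤ m) (hm : m ≤ n - 2)
    (b : ℕ → ℂ) (hb0 : ∀ j ≤ n - m, b j ≠ 0)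
    (hbinj : ∀ i ≤ n - m, ∀ j ≤ n - m, b i = b j → i = j)
    (a0 : Fin n → ℂ) (ha0 : a0 ∈ Theta n m b)
    (inm iN : Fin n) (hinm : (inm : ℕ) = n - m - 1) (hiN : (iN : ℕ) = n - 1) :
    ∃ (U : Set (Fin n → ℂ)) (V : Set ({j : Fin n // j ≠ inm ∧ j ≠ iN} → ℂ))
      (α β : ({j : Fin n // j ≠ inm ∧ j ≠ iN} → ℂ) → ℂ),
      IsOpen U ∧ a0 ∈ U ∧ IsOpen V ∧ (fun j => a0 j.1) ∈ V ∧
      AnalyticOnNhd ℂ α V ∧ AnalyticOnNhd ℂ β V ∧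
      Theta n m b ∩ U =
        {a ∈ U | (fun j : {j : Fin n // j ≠ inm ∧ j ≠ iN} => a j.1) ∈ V ∧
          a inm = α (fun j => a j.1) ∧ a iN = β (fun j => a j.1)} :=
  statement13_general n m hm2 hm b hb0 a0 ha0 inm iN hinm hiN
end

section
/- Let m = n−2 (so P_* = b₀x² + b₁a₁x + b₂a₂). With respect to the weighting that assigns to the variable a_j the weight j (j = 1,…,n): (i) the polynomial D̃_{n−2,1} is quasi-homogeneous of weight n(3n−2); (ii) the polynomial D̃_{n−2,2} is quasi-homogeneous of weight 2n(n−1); (iii) for k = 1 and k = 2, the polynomial B_{n−2,k} := Res(P_{n−2,k}, ∂P_{n−2,k}/∂x) is quasi-homogeneous of weight n(n−1). Here quasi-homogeneous of weight W means that every monomial a₁^{α₁}⋯aₙ^{αₙ} occurring with nonzero coefficient satisfies Σ_j j·α_j = W. -/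
open Polynomial

/-! Give `a_j` the weight `j` and `x` the weight `1`. Then `P`, `P_*`, `P_{m,k}` are
quasi-homogeneous, i.e. the coefficient of `x^e` has weight `deg - e`, and so is the partial
derivative `∂/∂x`. For such `f, g` the entry `(i, j)` of the Sylvester matrix has weight
`r i + c j` for suitable row and column weights, so each term of the determinant has the same
weight and `Res(f, g)` is quasi-homogeneous; in particular `D̃_m` has weight `n(n-m)`. Read as a
polynomial in `a_k`, a quasi-homogeneous polynomial of weight `W` has its coefficient of `a_k^t`
of weight `W - k t`, and the same count then applies to `Res(D̃_m, ∂D̃_m/∂a_k)`. -/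

theorem Finsupp.weight_optionElim {α M : Type*} [AddCommMonoid M] (w : Option α → M)
    (f : α →₀ ℕ) (y : ℕ) :
    Finsupp.weight w (f.optionElim y) = y • w none + Finsupp.weight (w ∘ Option.some) f := by
  rw [Finsupp.weight_apply, Finsupp.weight_apply, Finsupp.sum_option_index_smul,
    optionElim_apply_none, some_optionElim]
  rfl

namespace MvPolynomial.IsWeightedHomogeneous

variable {σ τ R M : Type*} [CommSemiring R]

theorem aeval [AddCommMonoid M] {w : σ → M} {w' : τ → M} {q : MvPolynomial σ R} {W : M}
    (hq : q.IsWeightedHomogeneous w W) {g : σ → MvPolynomial τ R}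
    (hg : ∀ i, (g i).IsWeightedHomogeneous w' (w i)) :
    (MvPolynomial.aeval g q).IsWeightedHomogeneous w' W := by
  rw [q.as_sum, map_sum]
  refine IsWeightedHomogeneous.sum _ _ _ fun d hd => ?_
  rw [aeval_monomial, algebraMap_eq, ← hq (mem_support_iff.mp hd), Finsupp.weight_apply]
  exact (IsWeightedHomogeneous.prod _ _ _ fun i _ => (hg i).pow (d i)).C_mul _

theorem coeff_optionEquivLeft [AddCommGroup M] {w : Option σ → M}
    {p : MvPolynomial (Option σ) R} {W : M} (hp : p.IsWeightedHomogeneous w W) (t : ℕ) :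
    ((optionEquivLeft R σ p).coeff t).IsWeightedHomogeneous (w ∘ Option.some)
      (W - t • w none) := by
  intro d hd
  rw [optionEquivLeft_coeff_coeff] at hd
  rw [← hp hd, Finsupp.weight_optionElim]
  abel

end MvPolynomial.IsWeightedHomogeneous

theorem Matrix.det_isWeightedHomogeneous {ι σ R M : Type*} [Fintype ι] [DecidableEq ι]
    [CommRing R] [AddCommMonoid M] {w : σ → M} (A : Matrix ι ι (MvPolynomial σ R))
    (r c : ι → M) (hA : ∀ i j, (A i j).IsWeightedHomogeneous w (r i + c j)) :
    A.det.IsWeightedHomogeneous w (∑ i, (r i + c i)) := by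
  rw [Matrix.det_apply, ← MvPolynomial.mem_weightedHomogeneousSubmodule R]
  refine Submodule.sum_mem _ fun π _ => Submodule.smul_of_tower_mem _ _ ?_
  have hprod := MvPolynomial.IsWeightedHomogeneous.prod Finset.univ (fun i => A (π i) i)
    (fun i => r (π i) + c i) fun i _ => hA (π i) i
  rwa [Finset.sum_add_distrib, Equiv.sum_comp π r, ← Finset.sum_add_distrib] at hprod

section Resultant

variable {σ R : Type*} [CommRing R] {w : σ → ℤ}

theorem res_isWeightedHomogeneous (f g : (MvPolynomial σ R)[X]) (df dg : ℕ) (A A' B : ℤ)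
    (hf : ∀ e : ℕ, (f.coeff e).IsWeightedHomogeneous w (A - B * e))
    (hg : ∀ e : ℕ, (g.coeff e).IsWeightedHomogeneous w (A' - B * e)) :
    (res f g df dg).IsWeightedHomogeneous w (dg * (A - B * df) + df * A') := by
  unfold res
  convert (sylv f g df dg).det_isWeightedHomogeneous (w := w)
    (fun i => if (i : ℕ) < dg then A - B * df - B * i else A' - B * i) (fun j => B * j) ?_
    using 1
  · simp [Fin.sum_univ_add, mul_sub]
  · intro i j
    simp only [sylv, Matrix.of_apply]
    split_ifs with hi hij hij
    · convert hf (df + i - j) using 1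
      rw [Nat.cast_sub (by omega)]
      push_cast
      ring
    · exact MvPolynomial.isWeightedHomogeneous_zero R w _
    · convert hg (i - j) using 1
      rw [Nat.cast_sub hij.2]
      ring
    · exact MvPolynomial.isWeightedHomogeneous_zero R w _

theorem coeff_derivative_isWeightedHomogeneous {f : (MvPolynomial σ R)[X]} {A B : ℤ}
    (hf : ∀ e : ℕ, (f.coeff e).IsWeightedHomogeneous w (A - B * e)) (e : ℕ) :
    ((derivative f).coeff e).IsWeightedHomogeneous w (A - B - B * e) := by
  rw [coeff_derivative,
    show ((e : MvPolynomial σ R) + 1) = MvPolynomial.C ((e : R) + 1) by simp]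
  convert (hf (e + 1)).mul (MvPolynomial.isWeightedHomogeneous_C w _) using 1
  push_cast
  ring

theorem res_derivative_isWeightedHomogeneous (f : (MvPolynomial σ R)[X]) (d : ℕ) (A B : ℤ)
    (hf : ∀ e : ℕ, (f.coeff e).IsWeightedHomogeneous w (A - B * e)) :
    (res f (derivative f) d (d - 1)).IsWeightedHomogeneous w
      ((d - 1 : ℕ) * (A - B * d) + d * (A - B)) :=
  res_isWeightedHomogeneous f _ d (d - 1) A (A - B) B hf
    (coeff_derivative_isWeightedHomogeneous hf)

end Resultant

/-- `X j` is the variable `a_{j+1}`; the weight is cast from `ℕ` so that weighted degrees match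
the natural-number sums of the statement. -/
def aWeight (n : ℕ) (j : Fin n) : ℤ := ((j : ℕ) + 1 : ℕ)

theorem Pgen_coeff_isWeightedHomogeneous (n e : ℕ) :
    ((Pgen n).coeff e).IsWeightedHomogeneous (aWeight n) (n - e) := by
  rw [Pgen, Polynomial.coeff_add, finsetSum_coeff]
  refine .add ?_ (.sum _ _ _ fun i _ => ?_)
  · rw [Polynomial.coeff_X_pow]
    split_ifs with h
    · simpa [h] using MvPolynomial.isWeightedHomogeneous_one ℂ (aWeight n)
    · exact MvPolynomial.isWeightedHomogeneous_zero ℂ _ _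
  · rw [coeff_C_mul_X_pow]
    split_ifs with h
    · convert MvPolynomial.isWeightedHomogeneous_X ℂ (aWeight n) i
      simp only [aWeight, h]
      omega
    · exact MvPolynomial.isWeightedHomogeneous_zero ℂ _ _

theorem Pstar_coeff_isWeightedHomogeneous (n m : ℕ) (b : ℕ → ℂ) (e : ℕ) :
    ((Pstar n m b).coeff e).IsWeightedHomogeneous (aWeight n) ((n - m : ℕ) - e) := by
  rw [Pstar, Polynomial.coeff_add, coeff_C_mul_X_pow, finsetSum_coeff]
  refine .add ?_ (.sum _ _ _ fun i _ => ?_)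
  · split_ifs with h
    · simpa [h] using MvPolynomial.isWeightedHomogeneous_C (aWeight n) (b 0)
    · exact MvPolynomial.isWeightedHomogeneous_zero ℂ _ _
  · split_ifs with hi
    · rw [coeff_C_mul_X_pow]
      split_ifs with h
      · convert (MvPolynomial.isWeightedHomogeneous_X ℂ (aWeight n) i).C_mul (b (i + 1))
        simp only [aWeight, h]
        omega
      · exact MvPolynomial.isWeightedHomogeneous_zero ℂ _ _
    · rw [Polynomial.coeff_zero]
      exact MvPolynomial.isWeightedHomogeneous_zero ℂ _ _

theorem Pmk_coeff_isWeightedHomogeneous {n m : ℕ} (hm : m ≤ n) (b : ℕ → ℂ) (k e : ℕ) :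
    ((Pmk n m b k).coeff e).IsWeightedHomogeneous (aWeight n) (n - e) := by
  rw [Pmk, Polynomial.coeff_sub, Polynomial.coeff_C_mul, Polynomial.coeff_X_pow_mul']
  refine .sub ((Pgen_coeff_isWeightedHomogeneous n e).C_mul _) ?_
  split_ifs with h
  · rw [show (n : ℤ) - e = (n - m : ℕ) - (e - m : ℕ) by omega]
    exact Pstar_coeff_isWeightedHomogeneous n m b (e - m)
  · exact MvPolynomial.isWeightedHomogeneous_zero ℂ _ _

theorem Dtilde_isWeightedHomogeneous (n m : ℕ) (b : ℕ → ℂ) :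
    (Dtilde n m b).IsWeightedHomogeneous (aWeight n) (n * (n - m : ℕ)) := by
  rw [show (n * (n - m : ℕ) : ℤ) = (n - m : ℕ) * (n - 1 * n) + n * (n - m : ℕ) by ring]
  exact res_isWeightedHomogeneous _ _ n (n - m) n (n - m : ℕ) 1
    (by simpa using Pgen_coeff_isWeightedHomogeneous n)
    (by simpa using Pstar_coeff_isWeightedHomogeneous n m b)

section RemainingVariables

variable {n : ℕ} {M : Type*} [AddCommGroup M] {w : Fin n → M} {q : MvPolynomial (Fin n) ℂ}
  {W : M}

theorem polyInK_coeff_isWeightedHomogeneous (k : Fin n) (hq : q.IsWeightedHomogeneous w W)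
    (t : ℕ) :
    ((polyInK k q).coeff t).IsWeightedHomogeneous (w ∘ Subtype.val) (W - t • w k) := by
  have hrename : (MvPolynomial.rename (Equiv.optionSubtypeNe k).symm q).IsWeightedHomogeneous
      (w ∘ Equiv.optionSubtypeNe k) W := by
    rw [MvPolynomial.rename_eq_aeval]
    refine hq.aeval fun i => ?_
    have hX := MvPolynomial.isWeightedHomogeneous_X ℂ (w ∘ Equiv.optionSubtypeNe k)
      ((Equiv.optionSubtypeNe k).symm i)
    rwa [Function.comp_apply, Equiv.apply_symm_apply] at hX
  exact hrename.coeff_optionEquivLeft t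

theorem toSub_isWeightedHomogeneous (k : Fin n) (hq : q.IsWeightedHomogeneous w W) :
    (toSub k q).IsWeightedHomogeneous (w ∘ Subtype.val) W := by
  refine hq.aeval fun j => ?_
  split_ifs with h
  · exact MvPolynomial.isWeightedHomogeneous_zero ℂ _ _
  · exact MvPolynomial.isWeightedHomogeneous_X ℂ _ (⟨j, h⟩ : {j // j ≠ k})

end RemainingVariables

theorem DtildeK_isWeightedHomogeneous (n m : ℕ) (b : ℕ → ℂ) (k : Fin n) (d : ℕ) :
    (DtildeK n m b k d).IsWeightedHomogeneous (aWeight n ∘ Subtype.val)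
      ((d - 1 : ℕ) * (n * (n - m : ℕ) - aWeight n k * d) +
        d * (n * (n - m : ℕ) - aWeight n k)) :=
  res_derivative_isWeightedHomogeneous _ d _ _ fun t => by
    simpa [mul_comm] using
      polyInK_coeff_isWeightedHomogeneous k (Dtilde_isWeightedHomogeneous n m b) t

theorem MvPolynomial.IsWeightedHomogeneous.sum_mul_eq_of_coeff_ne_zero {σ R : Type*}
    [Fintype σ] [CommSemiring R] {w : σ → ℕ} {p : MvPolynomial σ R} {W : ℤ}
    (hp : p.IsWeightedHomogeneous (fun i => (w i : ℤ)) W) {d : σ →₀ ℕ}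
    (hd : MvPolynomial.coeff d p ≠ 0) : ((∑ i, w i * d i : ℕ) : ℤ) = W := by
  rw [← hp hd, Finsupp.weight_eq_sum]
  push_cast
  simp [mul_comm]

theorem statement18_general (n : ℕ) (b : ℕ → ℂ)
    (k1 k2 : Fin n) (hk1 : (k1 : ℕ) = 0) (hk2 : (k2 : ℕ) = 1) :
    (∀ d : {j : Fin n // j ≠ k1} →₀ ℕ,
      MvPolynomial.coeff d (DtildeK n (n - 2) b k1 n) ≠ 0 →
        ∑ j : {j : Fin n // j ≠ k1}, (((j : Fin n) : ℕ) + 1) * d j = n * (3 * n - 2)) ∧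
    (∀ d : {j : Fin n // j ≠ k2} →₀ ℕ,
      MvPolynomial.coeff d (DtildeK n (n - 2) b k2 n) ≠ 0 →
        ∑ j : {j : Fin n // j ≠ k2}, (((j : Fin n) : ℕ) + 1) * d j = 2 * n * (n - 1)) ∧
    (∀ k : ℕ, k = 1 ∨ k = 2 → ∀ kk : Fin n, (kk : ℕ) = k - 1 →
      ∀ d : {j : Fin n // j ≠ kk} →₀ ℕ,
        MvPolynomial.coeff d (toSub kk
          (res (Pmk n (n - 2) b k) (Polynomial.derivative (Pmk n (n - 2) b k)) n (n - 1))) ≠ 0 →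
          ∑ j : {j : Fin n // j ≠ kk}, (((j : Fin n) : ℕ) + 1) * d j = n * (n - 1)) := by
  have hn : 2 ≤ n := by omega
  have hm : n - (n - 2) = 2 := by omega
  refine ⟨fun d hd => ?_, fun d hd => ?_, fun k _ kk _ d hd => ?_⟩
  · refine Nat.cast_injective (R := ℤ)
      (((DtildeK_isWeightedHomogeneous n (n - 2) b k1 n).sum_mul_eq_of_coeff_ne_zero hd).trans ?_)
    simp only [aWeight, hk1, hm]
    push_cast [Nat.cast_sub (by omega : 1 ≤ n), Nat.cast_sub (by omega : 2 ≤ 3 * n)]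
    ring
  · refine Nat.cast_injective (R := ℤ)
      (((DtildeK_isWeightedHomogeneous n (n - 2) b k2 n).sum_mul_eq_of_coeff_ne_zero hd).trans ?_)
    simp only [aWeight, hk2, hm]
    push_cast [Nat.cast_sub (by omega : 1 ≤ n)]
    ring
  · have hB := res_derivative_isWeightedHomogeneous (Pmk n (n - 2) b k) n n 1
      (by simpa using Pmk_coeff_isWeightedHomogeneous (Nat.sub_le n 2) b k)
    refine Nat.cast_injective (R := ℤ)
      (((toSub_isWeightedHomogeneous kk hB).sum_mul_eq_of_coeff_ne_zero hd).trans ?_)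
    push_cast [Nat.cast_sub (by omega : 1 ≤ n)]
    ring

/-- For `m = n-2`: (i) `D̃_{n-2,1}` is quasi-homogeneous of weight
`n(3n-2)`; (ii) `D̃_{n-2,2}` is quasi-homogeneous of weight `2n(n-1)`; (iii) for `k = 1, 2`,
`B_{n-2,k} = Res(P_{n-2,k}, P_{n-2,k}')` is quasi-homogeneous of weight `n(n-1)`. -/
theorem statement18 (n : ℕ) (hn : 4 ≤ n)
    (b : ℕ → ℂ) (hb0 : ∀ j ≤ 2, b j ≠ 0)
    (hbinj : ∀ i ≤ 2, ∀ j ≤ 2, b i = b j → i = j)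
    (k1 k2 : Fin n) (hk1 : (k1 : ℕ) = 0) (hk2 : (k2 : ℕ) = 1) :
    (∀ d : {j : Fin n // j ≠ k1} →₀ ℕ,
      MvPolynomial.coeff d (DtildeK n (n - 2) b k1 n) ≠ 0 →
        ∑ j : {j : Fin n // j ≠ k1}, (((j : Fin n) : ℕ) + 1) * d j = n * (3 * n - 2)) ∧
    (∀ d : {j : Fin n // j ≠ k2} →₀ ℕ,
      MvPolynomial.coeff d (DtildeK n (n - 2) b k2 n) ≠ 0 →
        ∑ j : {j : Fin n // j ≠ k2}, (((j : Fin n) : ℕ) + 1) * d j = 2 * n * (n - 1)) ∧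
    (∀ k : ℕ, k = 1 ∨ k = 2 → ∀ kk : Fin n, (kk : ℕ) = k - 1 →
      ∀ d : {j : Fin n // j ≠ kk} →₀ ℕ,
        MvPolynomial.coeff d (toSub kk
          (res (Pmk n (n - 2) b k) (Polynomial.derivative (Pmk n (n - 2) b k)) n (n - 1))) ≠ 0 →
          ∑ j : {j : Fin n // j ≠ kk}, (((j : Fin n) : ℕ) + 1) * d j = n * (n - 1)) :=
  statement18_general n b k1 k2 hk1 hk2
end
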